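/- For every positive integer n, the partition function satisfies Euler's recurrence: p(n) = \sum_{k \geq 1} (-1)^{k+1} \left( p\left(n - \frac{k(3k-1)}{2}\right) + p\left(n - \frac{k(3k+1)}{2}\right) \right), where p(t) is taken to be 0 whenever t < 0 (so the sum has only finitely many nonzero terms). -/

import Mathlib

/-!
Multiplying the generating function `∑ p(n) Xⁿ = ∏ᵢ (1 - Xⁱ)⁻¹` by Euler's product `∏ᵢ (1 - Xⁱ)`,
which by the pentagonal number theorem is `∑_{k ∈ ℤ} (-1)ᵏ X^{k(3k-1)/2}`, gives `1`. Reading off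
the coefficient of `Xⁿ` for `n ≥ 1` yields `∑_{k ∈ ℤ} (-1)ᵏ p(n - k(3k-1)/2) = 0`, and grouping the
terms `k` and `-k` (note `(-k)(3(-k)-1)/2 = k(3k+1)/2`) is Euler's recurrence.
-/

/-- `p(t)` for an integer argument: the number of partitions of `t` when `t ≥ 0`,
and `0` when `t < 0`. -/
def partitionCount (t : ℤ) : ℤ :=
  if 0 ≤ t then (Fintype.card (Nat.Partition t.toNat) : ℤ) else 0

open Finset PowerSeries PowerSeries.WithPiTopology

namespace Nat.Partition

theorem hasProd_powerSeriesMk_card (R : Type*) [CommSemiring R] [TopologicalSpace R] [T2Space R]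
    [IsTopologicalSemiring R] :
    HasProd (fun i ↦ ∑' j : ℕ, (X : R⟦X⟧) ^ ((i + 1) * j))
      (PowerSeries.mk fun n ↦ (Fintype.card n.Partition : R)) := by
  convert hasProd_powerSeriesMk_card_restricted R fun _ ↦ True <;> simp [restricted]

theorem powerSeriesMk_card_mul_pentagonalSeries (R : Type*) [CommRing R] :
    PowerSeries.mk (fun n ↦ (Fintype.card n.Partition : R)) * pentagonalSeries R = 1 := by
  -- the identity is algebraic, so any ring topology on `R` will do
  let _ : TopologicalSpace R := ⊥
  have _ : DiscreteTopology R := ⟨rfl⟩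
  have hgeom (i : ℕ) : (∑' j : ℕ, (X : R⟦X⟧) ^ ((i + 1) * j)) * (1 - X ^ (i + 1)) = 1 := by
    simp_rw [pow_mul]
    exact tsum_pow_mul_one_sub_of_constantCoeff_eq_zero (by simp)
  have h := (hasProd_powerSeriesMk_card R).mul (hasProd_one_sub_X_pow R)
  simp_rw [hgeom] at h
  exact h.unique hasProd_one

end Nat.Partition

theorem natAbs_le_pentagonal (k : ℤ) : k.natAbs ≤ pentagonal k := by
  have h := two_mul_natCast_pentagonal k
  zify
  rcases abs_cases k with ⟨hk, -⟩ | ⟨hk, -⟩ <;> nlinarith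

theorem partitionCount_of_neg {t : ℤ} (ht : t < 0) : partitionCount t = 0 :=
  if_neg ht.not_ge

theorem partitionCount_sub_pentagonal_of_lt_natAbs {n : ℕ} {k : ℤ} (hk : n < k.natAbs) :
    partitionCount (n - pentagonal k) = 0 :=
  partitionCount_of_neg (by have := natAbs_le_pentagonal k; omega)

theorem partitionCount_natCast_sub_eq_coeff (n m : ℕ) :
    partitionCount (n - m) =
      coeff n (X ^ m * PowerSeries.mk fun n ↦ (Fintype.card n.Partition : ℤ)) := by
  rw [coeff_X_pow_mul', partitionCount]
  split_ifs
  · simp [show ((n : ℤ) - m).toNat = n - m by omega]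
  · omega
  · omega
  · rfl

theorem hasSum_negOnePow_mul_partitionCount_sub_pentagonal {n : ℕ} (hn : n ≠ 0) :
    HasSum (fun k : ℤ ↦ (k.negOnePow : ℤ) * partitionCount (n - pentagonal k)) 0 := by
  have h := (hasSum_pentagonalSeries ℤ).mul_right
    (PowerSeries.mk fun n ↦ (Fintype.card n.Partition : ℤ))
  rw [mul_comm (pentagonalSeries ℤ), Nat.Partition.powerSeriesMk_card_mul_pentagonalSeries,
    hasSum_iff_hasSum_coeff] at h
  simpa only [partitionCount_natCast_sub_eq_coeff, ← zsmul_eq_mul, smul_mul_assoc, map_zsmul,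
    smul_eq_mul, coeff_one, hn, if_false] using h n

theorem negOnePow_mul_partitionCount_sub_pentagonal_add_neg (n k : ℕ) :
    ((k : ℤ).negOnePow : ℤ) * partitionCount (n - pentagonal k) +
        ((-k : ℤ).negOnePow : ℤ) * partitionCount (n - pentagonal (-k)) =
      (-1) ^ k * (partitionCount (n - k * (3 * k - 1) / 2) +
        partitionCount (n - k * (3 * k + 1) / 2)) := by
  have hneg : -(k : ℤ) * (3 * -k - 1) = k * (3 * k + 1) := by ring
  rw [Int.negOnePow_neg, Int.coe_negOnePow_natCast, natCast_pentagonal, natCast_pentagonal, hneg,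
    ← mul_add]

/-- Euler's recurrence: for every positive integer `n`,
`p(n) = ∑_{k ≥ 1} (-1)^{k+1} (p(n - k(3k-1)/2) + p(n - k(3k+1)/2))`,
where `p(t) = 0` for `t < 0`.  All nonzero terms occur for `1 ≤ k ≤ n`. -/
theorem euler_recurrence (n : ℕ) (hn : 0 < n) :
    partitionCount (n : ℤ) =
      ∑ k ∈ Finset.Icc 1 n, (-1 : ℤ) ^ (k + 1) *
        (partitionCount ((n : ℤ) - (k : ℤ) * (3 * k - 1) / 2) +
         partitionCount ((n : ℤ) - (k : ℤ) * (3 * k + 1) / 2)) := by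
  have hsum := (hasSum_negOnePow_mul_partitionCount_sub_pentagonal hn.ne').nat_add_neg
  have hfinite := hsum.unique (hasSum_sum_of_ne_finset_zero (s := range (n + 1)) fun k hk ↦ by
    rw [mem_range, not_lt] at hk
    rw [partitionCount_sub_pentagonal_of_lt_natAbs (by simpa),
      partitionCount_sub_pentagonal_of_lt_natAbs (by simpa), mul_zero, mul_zero, add_zero])
  have hzero : ((0 : ℤ).negOnePow : ℤ) * partitionCount (n - pentagonal 0) = partitionCount n := by
    simp [pentagonal_def]
  rw [sum_range_eq_add_Ico _ n.add_one_pos, Ico_add_one_right_eq_Icc] at hfinite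
  simp only [Nat.cast_zero, neg_zero, zero_add, hzero,
    negOnePow_mul_partitionCount_sub_pentagonal_add_neg] at hfinite
  simp only [pow_succ, mul_neg_one, neg_mul, sum_neg_distrib]
  linarith
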